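/- arXiv:2007.04159 — 6 statements merged into one kernel-verified Lean document; each statement's English description precedes it below -/
import Mathlib

section
/- Let q be a prime power, n ≥ 1 with gcd(n,q) = 1, and let ζ be a primitive n-th root of unity in an algebraic closure K of F_q. For every nonzero vector f ∈ F_q^n, the Hamming weights satisfy w_H(f) · w_H(f̂) ≥ n, where f̂ is the Mattson–Solomon vector of f. -/
open Polynomial

/-- Hamming weight of a vector: its number of nonzero coordinates. -/
noncomputable def wt {ι α : Type*} [Zero α] (v : ι → α) : ℕ := Set.ncard {i | v i ≠ 0}

/-- The polynomial f(X) = Σ_{i=0}^{n-1} f_i X^i attached to a vector f ∈ F^n. -/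
noncomputable def vecPoly {F : Type*} [Field F] {n : ℕ} (f : Fin n → F) : F[X] :=
  ∑ i : Fin n, Polynomial.C (f i) * Polynomial.X ^ (i : ℕ)

/-- The Mattson–Solomon vector f̂ = (f(ζ), f(ζ²), …, f(ζⁿ)) ∈ Kⁿ. -/
noncomputable def msVec {F : Type*} [Field F] {n : ℕ} (ζ : AlgebraicClosure F)
    (f : Fin n → F) : Fin n → AlgebraicClosure F :=
  fun j => Polynomial.aeval (ζ ^ ((j : ℕ) + 1)) (vecPoly f)

open Finset

section Aux

variable {F : Type*} [Field F] {n : ℕ}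

lemma wt_eq_card {ι α : Type*} [Fintype ι] [Zero α] (v : ι → α) [DecidablePred fun i => v i ≠ 0] :
    wt v = (Finset.univ.filter fun i => v i ≠ 0).card := by
  rw [wt, ← Set.ncard_coe_finset]
  congr 1
  ext i
  simp

/-- Fin n → ZMod n -/
def finToZ {n : ℕ} (i : Fin n) : ZMod n := ((i : ℕ) : ZMod n)

def idxEquiv (hn : 0 < n) : Fin n ≃ ZMod n := by
  haveI : NeZero n := ⟨hn.ne'⟩
  exact { toFun := finToZ
          invFun := fun z => ⟨z.val, ZMod.val_lt z⟩
          left_inv := fun i => by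
            ext
            simp [finToZ, ZMod.val_natCast_of_lt i.isLt]
          right_inv := fun z => by
            simp only [finToZ]
            exact ZMod.natCast_rightInverse z }

lemma vecPoly_coeff (f : Fin n → F) (i : Fin n) : (vecPoly f).coeff (i : ℕ) = f i := by
  rw [vecPoly, Polynomial.finset_sum_coeff]
  rw [Finset.sum_eq_single i]
  · simp
  · intro b _ hb
    have : (b : ℕ) ≠ (i : ℕ) := fun h => hb (Fin.ext h)
    simp only [Polynomial.coeff_C_mul, Polynomial.coeff_X_pow, if_neg this.symm, mul_zero]
  · simp

lemma vecPoly_ne_zero {f : Fin n → F} (hf : f ≠ 0) : vecPoly f ≠ 0 := by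
  obtain ⟨i, hi⟩ : ∃ i, f i ≠ 0 := by
    by_contra h
    push_neg at h
    exact hf (funext h)
  intro h
  apply hi
  rw [← vecPoly_coeff f i, h, Polynomial.coeff_zero]

lemma vecPoly_natDegree_le (f : Fin n → F) (D : ℕ) (h : ∀ i, f i ≠ 0 → (i : ℕ) ≤ D) :
    (vecPoly f).natDegree ≤ D := by
  apply Polynomial.natDegree_sum_le_of_forall_le
  intro i _
  by_cases hi : f i = 0
  · simp [hi]
  · refine le_trans (Polynomial.natDegree_C_mul_le _ _) ?_
    simpa using h i hi

lemma aeval_vecPoly (f : Fin n → F) (x : AlgebraicClosure F) :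
    Polynomial.aeval x (vecPoly f) = ∑ i : Fin n, algebraMap F _ (f i) * x ^ (i : ℕ) := by
  rw [vecPoly, map_sum]
  simp

end Aux

section Shift

variable {F : Type*} [Field F] {n : ℕ}

def shiftIdx (hn : 0 < n) (c : ZMod n) : Fin n ≃ Fin n :=
  (idxEquiv hn).trans ((Equiv.addRight c).trans (idxEquiv hn).symm)

noncomputable def shiftVec (hn : 0 < n) (c : ZMod n) (f : Fin n → F) : Fin n → F :=
  f ∘ (shiftIdx hn c)

lemma wt_shiftVec (hn : 0 < n) (c : ZMod n) (f : Fin n → F) :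
    wt (shiftVec hn c f) = wt f := by
  have h : {i | shiftVec hn c f i ≠ 0} = (shiftIdx hn c) ⁻¹' {i | f i ≠ 0} := rfl
  have h2 : (shiftIdx hn c) ⁻¹' {i | f i ≠ 0} = (shiftIdx hn c).symm '' {i | f i ≠ 0} := by
    ext x
    simp [Equiv.symm_apply_eq, eq_comm]
  rw [wt, h, h2, Set.ncard_image_of_injective _ (shiftIdx hn c).symm.injective, wt]

lemma finToZ_shiftIdx (hn : 0 < n) (c : ZMod n) (i : Fin n) :
    finToZ (shiftIdx hn c i) = finToZ i + c := by
  haveI : NeZero n := ⟨hn.ne'⟩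
  have : finToZ (shiftIdx hn c i) = idxEquiv hn (shiftIdx hn c i) := rfl
  rw [this, shiftIdx]
  simp [idxEquiv, finToZ]

-- congruence of powers of a primitive root
lemma pow_mod_n {M : Type*} [Monoid M] {x : M} (hx : x ^ n = 1) (a : ℕ) :
    x ^ a = x ^ (a % n) := by
  conv_lhs => rw [← Nat.div_add_mod a n]
  rw [pow_add, pow_mul, hx, one_pow, one_mul]

lemma pow_congr {ζ : AlgebraicClosure F} (hζ : IsPrimitiveRoot ζ n) {a b : ℕ}
    (h : a ≡ b [MOD n]) : ζ ^ a = ζ ^ b := by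
  rw [pow_mod_n hζ.pow_eq_one a, pow_mod_n hζ.pow_eq_one b, h]

lemma msVec_shift (hn : 0 < n) {ζ : AlgebraicClosure F} (hζ : IsPrimitiveRoot ζ n)
    (c : ZMod n) (f : Fin n → F) (j : Fin n) :
    msVec ζ f j = ζ ^ (((j : ℕ) + 1) * c.val) * msVec ζ (shiftVec hn c f) j := by
  haveI : NeZero n := ⟨hn.ne'⟩
  set m := (j : ℕ) + 1
  rw [msVec, msVec, aeval_vecPoly, aeval_vecPoly, Finset.mul_sum]
  rw [← Equiv.sum_comp (shiftIdx hn c)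
    (fun i => algebraMap F _ (f i) * (ζ ^ m) ^ (i : ℕ))]
  apply Finset.sum_congr rfl
  intro i _
  have hcong : ((shiftIdx hn c i : Fin n) : ℕ) ≡ (i : ℕ) + c.val [MOD n] := by
    rw [← ZMod.natCast_eq_natCast_iff]
    push_cast
    have h1 : (((shiftIdx hn c i : Fin n) : ℕ) : ZMod n) = finToZ (shiftIdx hn c i) := rfl
    have h2 : (((i : Fin n) : ℕ) : ZMod n) = finToZ i := rfl
    rw [h1, finToZ_shiftIdx hn c i]
    congr 1
    exact (ZMod.natCast_rightInverse c).symm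
  rw [shiftVec]
  simp only [Function.comp_apply, ← pow_mul]
  rw [mul_left_comm, ← pow_add]
  congr 1
  refine pow_congr hζ ?_
  have heq : m * c.val + m * (i : ℕ) = m * ((i : ℕ) + c.val) := by ring
  rw [heq]
  exact Nat.ModEq.mul_left m hcong

end Shift

section Roots

variable {F : Type*} [Field F] {n : ℕ}

open Classical in
lemma card_zeros_msVec_le (hn : 0 < n) {ζ : AlgebraicClosure F} (hζ : IsPrimitiveRoot ζ n)
    {g : Fin n → F} (hg : g ≠ 0) (D : ℕ) (hD : ∀ i, g i ≠ 0 → (i : ℕ) ≤ D) :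
    (Finset.univ.filter fun j : Fin n => msVec ζ g j = 0).card ≤ D := by
  set P : (AlgebraicClosure F)[X] := (vecPoly g).map (algebraMap F (AlgebraicClosure F)) with hP
  have hP0 : P ≠ 0 := by
    rw [hP, Ne, Polynomial.map_eq_zero_iff (algebraMap F (AlgebraicClosure F)).injective]
    exact vecPoly_ne_zero hg
  have hPdeg : P.natDegree ≤ D := by
    rw [hP, Polynomial.natDegree_map]
    exact vecPoly_natDegree_le g D hD
  have key : ∀ j : Fin n, msVec ζ g j = 0 → ζ ^ (((j : ℕ) + 1) % n) ∈ P.roots.toFinset := by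
    intro j hj
    rw [Multiset.mem_toFinset, Polynomial.mem_roots hP0]
    rw [Polynomial.IsRoot, hP, Polynomial.eval_map, ← Polynomial.aeval_def,
      ← pow_mod_n hζ.pow_eq_one]
    exact hj
  calc (Finset.univ.filter fun j : Fin n => msVec ζ g j = 0).card
      ≤ P.roots.toFinset.card := by
        refine Finset.card_le_card_of_injOn (fun j => ζ ^ (((j : ℕ) + 1) % n)) ?_ ?_
        · intro j hj
          exact key j (Finset.mem_filter.mp hj).2
        · intro j1 _ j2 _ hee
          have h1 := hζ.pow_inj (Nat.mod_lt _ hn) (Nat.mod_lt _ hn) hee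
          have e1 : (j1 : ℕ) < n := j1.isLt
          have e2 : (j2 : ℕ) < n := j2.isLt
          have m1 : ((j1 : ℕ) + 1) % n = if (j1 : ℕ) + 1 = n then 0 else (j1 : ℕ) + 1 := by
            split
            · simp [*]
            · exact Nat.mod_eq_of_lt (by omega)
          have m2 : ((j2 : ℕ) + 1) % n = if (j2 : ℕ) + 1 = n then 0 else (j2 : ℕ) + 1 := by
            split
            · simp [*]
            · exact Nat.mod_eq_of_lt (by omega)
          rw [m1, m2] at h1
          apply Fin.ext
          split at h1 <;> split at h1 <;> omega
    _ ≤ Multiset.card P.roots := P.roots.toFinset_card_le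
    _ ≤ P.natDegree := P.card_roots'
    _ ≤ D := hPdeg

end Roots

section Gap

lemma exists_gap {n : ℕ} [NeZero n] (S : Finset (ZMod n)) (hS : S.Nonempty) :
    ∃ (a : ZMod n) (k : ℕ), a ∈ S ∧ k < n ∧ n ≤ S.card * (k + 1) ∧
      ∀ m : ℕ, 1 ≤ m → m ≤ k → a + (m : ZMod n) ∉ S := by
  classical
  obtain ⟨a0, ha0⟩ := hS
  have hex : ∀ x : ZMod n, ∃ j : ℕ, x - (j : ZMod n) ∈ S := by
    intro x
    refine ⟨(x - a0).val, ?_⟩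
    rw [ZMod.natCast_rightInverse (x - a0)]
    simpa using ha0
  set φ : ZMod n → ZMod n := fun x => x - (Nat.find (hex x) : ZMod n) with hφ
  have hφS : ∀ x, φ x ∈ S := fun x => Nat.find_spec (hex x)
  have hfindlt : ∀ x, Nat.find (hex x) < n := by
    intro x
    have : Nat.find (hex x) ≤ (x - a0).val := by
      apply Nat.find_le
      rw [ZMod.natCast_rightInverse (x - a0)]
      simpa using ha0
    exact lt_of_le_of_lt this (ZMod.val_lt _)
  have hn : 0 < n := Nat.pos_of_ne_zero (NeZero.ne n)
  have hs : 0 < S.card := Finset.card_pos.mpr ⟨a0, ha0⟩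
  -- pigeonhole
  have hcard : S.card * ((n - 1) / S.card) < (Finset.univ : Finset (ZMod n)).card := by
    rw [Finset.card_univ, ZMod.card]
    calc S.card * ((n - 1) / S.card) ≤ n - 1 := by
          rw [mul_comm]; exact Nat.div_mul_le_self _ _
      _ < n := by omega
  obtain ⟨a, haS, hfib⟩ := Finset.exists_lt_card_fiber_of_mul_lt_card_of_maps_to
    (fun x _ => hφS x) hcard
  set fib := Finset.univ.filter fun x => φ x = a with hfibdef
  have hfibne : fib.Nonempty := Finset.card_pos.mp (lt_of_le_of_lt (Nat.zero_le _) hfib)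
  set img := fib.image fun x => (x - a).val with himg
  have himgne : img.Nonempty := hfibne.image _
  set k := img.max' himgne with hk
  obtain ⟨x₀, hx₀fib, hx₀⟩ := Finset.mem_image.mp (img.max'_mem himgne)
  have hx₀a : x₀ - (Nat.find (hex x₀) : ZMod n) = a := (Finset.mem_filter.mp hx₀fib).2
  have h1 : (Nat.find (hex x₀) : ZMod n) = x₀ - a := by rw [← hx₀a]; ring
  have h2 : Nat.find (hex x₀) = k := by
    have h3 : ((Nat.find (hex x₀) : ZMod n)).val = Nat.find (hex x₀) :=
      ZMod.val_natCast_of_lt (hfindlt x₀)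
    rw [h1, hx₀] at h3
    exact h3.symm
  have h1k : (k : ZMod n) = x₀ - a := by rw [← h2]; exact h1
  refine ⟨a, k, haS, by rw [← h2]; exact hfindlt x₀, ?_, ?_⟩
  · -- n ≤ S.card * (k + 1)
    have hsub : fib ⊆ (Finset.range (k + 1)).image fun d : ℕ => a + (d : ZMod n) := by
      intro x hx
      refine Finset.mem_image.mpr ⟨(x - a).val, Finset.mem_range.mpr ?_, ?_⟩
      · have h6 : (x - a).val ∈ img := Finset.mem_image.mpr ⟨x, hx, rfl⟩
        have h7 := img.le_max' _ h6
        omega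
      · rw [ZMod.natCast_rightInverse (x - a)]; ring
    have hc1 : fib.card ≤ k + 1 := by
      calc fib.card ≤ ((Finset.range (k + 1)).image fun d : ℕ => a + (d : ZMod n)).card :=
            Finset.card_le_card hsub
        _ ≤ (Finset.range (k + 1)).card := Finset.card_image_le
        _ = k + 1 := Finset.card_range _
    have hdm := Nat.div_add_mod (n - 1) S.card
    have hmod : (n - 1) % S.card < S.card := Nat.mod_lt _ hs
    have h4 : S.card * ((n - 1) / S.card + 1) ≤ S.card * (k + 1) :=
      Nat.mul_le_mul_left _ (by omega)
    have h5 : n ≤ S.card * ((n - 1) / S.card + 1) := by rw [Nat.mul_add, mul_one]; omega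
    omega
  · -- gap
    intro m hm1 hmk hmem
    have hlt : k - m < Nat.find (hex x₀) := by omega
    apply Nat.find_min (hex x₀) hlt
    have heq : x₀ - ((k - m : ℕ) : ZMod n) = a + (m : ZMod n) := by
      have hxe : x₀ = a + (k : ZMod n) := by rw [h1k]; ring
      have hc : ((k - m : ℕ) : ZMod n) = (k : ZMod n) - (m : ZMod n) := Nat.cast_sub hmk
      rw [hxe, hc]
      ring
    rw [heq]
    exact hmem

end Gap


/-- **Naive uncertainty principle over finite fields**: for any nonzero f ∈ F_q^n,
with gcd(n,q) = 1, we have w_H(f) · w_H(f̂) ≥ n. -/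
theorem naive_UP (q n : ℕ) (F : Type*) [Field F] [Fintype F] (hq : Fintype.card F = q)
    (hn : 1 ≤ n) (hcop : Nat.Coprime n q)
    (ζ : AlgebraicClosure F) (hζ : IsPrimitiveRoot ζ n)
    (f : Fin n → F) (hf : f ≠ 0) :
    n ≤ wt f * wt (msVec ζ f) := by
  classical
  haveI : NeZero n := ⟨by omega⟩
  have hn0 : 0 < n := hn
  obtain ⟨i₀, hi₀⟩ : ∃ i, f i ≠ 0 := by
    by_contra h
    push_neg at h
    exact hf (funext h)
  set suppF : Finset (Fin n) := Finset.univ.filter (fun i => f i ≠ 0) with hsupp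
  have hwtf : wt f = suppF.card := wt_eq_card f
  set S : Finset (ZMod n) := suppF.image finToZ with hS
  have hinj : Function.Injective (finToZ (n := n)) := (idxEquiv hn0).injective
  have hScard : S.card = suppF.card := Finset.card_image_of_injective _ hinj
  have hSne : S.Nonempty :=
    ⟨finToZ i₀, Finset.mem_image.mpr ⟨i₀, Finset.mem_filter.mpr ⟨Finset.mem_univ _, hi₀⟩, rfl⟩⟩
  obtain ⟨a, k, haS, hkn, hcard, hgap⟩ := exists_gap S hSne
  set c : ZMod n := a + ((k + 1 : ℕ) : ZMod n) with hc
  set g : Fin n → F := shiftVec hn0 c f with hg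
  -- support of g lies in low degrees
  have hgsupp : ∀ i : Fin n, g i ≠ 0 → (i : ℕ) ≤ n - 1 - k := by
    intro i hgi
    by_contra hibig
    push_neg at hibig
    have hilt : (i : ℕ) < n := i.isLt
    set m : ℕ := n - (i : ℕ) with hm
    have hmem : finToZ (shiftIdx hn0 c i) ∈ S := by
      refine Finset.mem_image.mpr ⟨shiftIdx hn0 c i, ?_, rfl⟩
      exact Finset.mem_filter.mpr ⟨Finset.mem_univ _, hgi⟩
    rw [finToZ_shiftIdx] at hmem
    have heq : finToZ i + c = a + ((k + 1 - m : ℕ) : ZMod n) := by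
      have h8 : (i : ℕ) + (k + 1) = n + (k + 1 - m) := by omega
      rw [hc, finToZ]
      calc ((i : ℕ) : ZMod n) + (a + ((k + 1 : ℕ) : ZMod n))
          = a + (((i : ℕ) + (k + 1) : ℕ) : ZMod n) := by push_cast; ring
        _ = a + ((n + (k + 1 - m) : ℕ) : ZMod n) := by rw [h8]
        _ = a + ((k + 1 - m : ℕ) : ZMod n) := by push_cast [ZMod.natCast_self]; ring
    rw [heq] at hmem
    exact hgap _ (by omega) (by omega) hmem
  have hg0 : g ≠ 0 := by
    intro h
    apply hi₀
    have : g ((shiftIdx hn0 c).symm i₀) = f i₀ := by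
      rw [hg, shiftVec]
      simp only [Function.comp_apply, Equiv.apply_symm_apply]
    rw [← this, h]
    rfl
  have hz := card_zeros_msVec_le hn0 hζ hg0 (n - 1 - k) hgsupp
  have hsplit : (Finset.univ.filter fun j : Fin n => msVec ζ g j = 0).card
      + (Finset.univ.filter fun j : Fin n => msVec ζ g j ≠ 0).card = n := by
    rw [Finset.card_filter_add_card_filter_not, Finset.card_univ, Fintype.card_fin]
  have hwtg : k + 1 ≤ wt (msVec ζ g) := by
    rw [wt_eq_card]
    omega
  have hwteq : wt (msVec ζ f) = wt (msVec ζ g) := by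
    rw [wt_eq_card, wt_eq_card]
    congr 1
    apply Finset.filter_congr
    intro j _
    have hms := msVec_shift hn0 hζ c f j
    have hzne : ζ ^ (((j : ℕ) + 1) * c.val) ≠ 0 :=
      pow_ne_zero _ (hζ.ne_zero hn0.ne')
    constructor
    · intro h1 h2
      rw [hms, h2, mul_zero] at h1
      exact h1 rfl
    · intro h1 h2
      rw [hms] at h2
      exact h1 (by
        rcases mul_eq_zero.mp h2 with h | h
        · exact absurd h hzne
        · exact h)
  have hwtfS : S.card = wt f := by rw [hwtf, hScard]
  calc n ≤ S.card * (k + 1) := hcard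
    _ ≤ wt f * wt (msVec ζ f) := by
        rw [hwtfS] at *
        rw [hwteq]
        exact Nat.mul_le_mul_left _ hwtg
end

section
/- Let q be a prime power and n ≥ 1 with gcd(n,q) = 1. For every nonzero f ∈ R(F_q,n) = F_q[X]/(X^n−1), the ideal C(f) generated by f satisfies d(C(f)) · dim_{F_q} C(f) ≥ n. -/
open Polynomial

/-- The ring R(F,n) = F[X]/(X^n - 1). -/
abbrev CycRing (F : Type*) [Field F] (n : ℕ) := AdjoinRoot (X ^ n - Polynomial.C (1 : F))

/-- The unique representative of degree < n of an element of F[X]/(X^n-1). -/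
noncomputable def cycRep {F : Type*} [Field F] {n : ℕ} (f : CycRing F n) : F[X] :=
  if h : n = 0 then 0
  else AdjoinRoot.modByMonicHom (monic_X_pow_sub_C (1 : F) h) f

/-- Hamming weight of an element of F[X]/(X^n-1): the number of nonzero coefficients of
its representative of degree < n. -/
noncomputable def cycWt {F : Type*} [Field F] {n : ℕ} (f : CycRing F n) : ℕ :=
  (cycRep f).support.card

/-- Minimum distance of a cyclic code (ideal of F[X]/(X^n-1)). -/
noncomputable def cycDist {F : Type*} [Field F] {n : ℕ} (I : Ideal (CycRing F n)) : ℕ :=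
  sInf {w | ∃ f ∈ I, f ≠ 0 ∧ cycWt f = w}

/-- Dimension of a cyclic code as an F-vector space. -/
noncomputable def cycDim (F : Type*) [Field F] {n : ℕ} (I : Ideal (CycRing F n)) : ℕ :=
  Module.finrank F (Submodule.restrictScalars F I)

/-!
Let `c` be a nonzero codeword of minimal weight `d` in `C = (f)`. Its cyclic shifts `X ^ i * c`
lie in `C` and all have weight `d`, and every coordinate is nonzero in some shift. Pick a basis
of their span among the shifts: it has at most `dim C` elements, and every coordinate is nonzero
in one of them, since a coordinate vanishing on the basis vanishes on the span. So the `n`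
coordinates are covered by at most `dim C` supports of size `d`.
-/

open Finset Module Submodule in
open scoped Classical in
theorem card_le_finrank_span_mul_of_forall_exists_ne_zero {K M ι : Type*} [Field K]
    [AddCommGroup M] [Module K M] [FiniteDimensional K M] [Fintype ι]
    (e : ι → Dual K M) (s : Set M) (w : ℕ) (hw : ∀ v ∈ s, #{i | e i v ≠ 0} ≤ w)
    (hcover : ∀ i, ∃ v ∈ s, e i v ≠ 0) :
    Fintype.card ι ≤ finrank K (span K s) * w := by
  obtain ⟨b, hbs, hspan, hli⟩ := exists_linearIndependent K s
  have : Fintype b := hli.set_finite_of_isNoetherian.fintype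
  have hcover_b : ∀ i, ∃ u ∈ b, e i u ≠ 0 := by
    intro i
    obtain ⟨v, hv, hev⟩ := hcover i
    by_contra! h
    have hker : span K b ≤ LinearMap.ker (e i) := span_le.2 h
    exact hev (hker (hspan ▸ subset_span hv))
  calc Fintype.card ι
      ≤ #(b.toFinset.biUnion fun u => {i | e i u ≠ 0}) :=
        card_le_card fun i _ => by simpa using hcover_b i
    _ ≤ #b.toFinset * w :=
        card_biUnion_le_card_mul _ _ _ fun u hu => hw u (hbs (Set.mem_toFinset.1 hu))
    _ = finrank K (span K s) * w := by rw [← hspan, finrank_span_set_eq_card hli]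

namespace CycRing

open Finset Module Submodule

variable {F : Type*} [Field F] {n : ℕ}

local notation "ω" => AdjoinRoot.root (X ^ n - C (1 : F))

theorem root_pow_eq_root_pow_mod (k : ℕ) : (ω : CycRing F n) ^ k = ω ^ (k % n) := by
  refine pow_eq_pow_mod k (sub_eq_zero.1 ?_)
  rw [← AdjoinRoot.mk_X, ← map_pow, ← map_one (AdjoinRoot.mk _), ← C_1, ← map_sub,
    AdjoinRoot.mk_self]

variable [NeZero n]

theorem monic_X_pow_sub_one : (X ^ n - C (1 : F)).Monic :=
  monic_X_pow_sub_C 1 (NeZero.ne n)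

theorem degree_X_pow_sub_one : (X ^ n - C (1 : F)).degree = (n : WithBot ℕ) :=
  degree_X_pow_sub_C (NeZero.pos n) 1

theorem cycRep_eq_modByMonicHom (c : CycRing F n) :
    cycRep c = AdjoinRoot.modByMonicHom monic_X_pow_sub_one c :=
  dif_neg (NeZero.ne n)

theorem mk_cycRep (c : CycRing F n) : AdjoinRoot.mk _ (cycRep c) = c := by
  rw [cycRep_eq_modByMonicHom]
  exact AdjoinRoot.mk_leftInverse monic_X_pow_sub_one c

theorem cycRep_mk_of_degree_lt {g : F[X]} (hg : g.degree < n) :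
    cycRep (AdjoinRoot.mk (X ^ n - C (1 : F)) g) = g := by
  rw [cycRep_eq_modByMonicHom, AdjoinRoot.modByMonicHom_mk,
    modByMonic_eq_self_iff monic_X_pow_sub_one, degree_X_pow_sub_one]
  exact hg

theorem lt_of_mem_support_cycRep {c : CycRing F n} {k : ℕ} (hk : k ∈ (cycRep c).support) :
    k < n := by
  obtain ⟨g, rfl⟩ := AdjoinRoot.mk_surjective c
  have hdeg := degree_modByMonic_lt g (monic_X_pow_sub_one (F := F) (n := n))
  rw [degree_X_pow_sub_one] at hdeg
  rw [cycRep_eq_modByMonicHom, AdjoinRoot.modByMonicHom_mk] at hk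
  exact_mod_cast (le_degree_of_mem_supp k hk).trans_lt hdeg

-- Coordinates are indexed by `ZMod n` so that multiplication by the root acts as translation.
noncomputable def cycCoeff (j : ZMod n) : Dual F (CycRing F n) :=
  (lcoeff F j.val).comp (AdjoinRoot.modByMonicHom monic_X_pow_sub_one)

theorem cycCoeff_apply (j : ZMod n) (c : CycRing F n) :
    cycCoeff j c = (cycRep c).coeff j.val := by
  rw [cycRep_eq_modByMonicHom]
  rfl

open scoped Classical in
theorem card_cycCoeff_ne_zero (c : CycRing F n) : #{j | cycCoeff j c ≠ 0} = cycWt c := by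
  refine card_nbij' ZMod.val Nat.cast (fun j hj => ?_) (fun k hk => ?_) (fun j _ => ?_)
    (fun k hk => ?_)
  · simpa [cycCoeff_apply] using hj
  · have hkn := lt_of_mem_support_cycRep (Finset.mem_coe.1 hk)
    simpa [cycCoeff_apply, ZMod.val_cast_of_lt hkn] using hk
  · exact ZMod.natCast_zmod_val j
  · exact ZMod.val_cast_of_lt (lt_of_mem_support_cycRep (Finset.mem_coe.1 hk))

theorem cycCoeff_root_pow (j : ZMod n) (k : ℕ) :
    cycCoeff j ((ω : CycRing F n) ^ k) = if j = (k : ZMod n) then 1 else 0 := by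
  have hdeg : (X ^ (k % n) : F[X]).degree < n := by
    rw [degree_X_pow]
    exact_mod_cast Nat.mod_lt k (NeZero.pos n)
  rw [cycCoeff_apply, root_pow_eq_root_pow_mod, ← AdjoinRoot.mk_X, ← map_pow,
    cycRep_mk_of_degree_lt hdeg, coeff_X_pow, ← ZMod.val_natCast]
  simp only [(ZMod.val_injective n).eq_iff]

theorem cycCoeff_add_one_root_mul (j : ZMod n) (c : CycRing F n) :
    cycCoeff (j + 1) (ω * c) = cycCoeff j c := by
  have hcomp : (cycCoeff (j + 1)).comp (LinearMap.mulLeft F ω) = cycCoeff j :=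
    (AdjoinRoot.powerBasis' monic_X_pow_sub_one).basis.ext fun i => by
      simp [cycCoeff_root_pow, ← pow_succ']
  exact LinearMap.congr_fun hcomp c

theorem cycCoeff_add_root_pow_mul (j : ZMod n) (i : ℕ) (c : CycRing F n) :
    cycCoeff (j + (i : ZMod n)) (ω ^ i * c) = cycCoeff j c := by
  induction i generalizing j with
  | zero => simp
  | succ i ih =>
    rw [Nat.cast_succ, ← add_assoc, pow_succ', mul_assoc, cycCoeff_add_one_root_mul, ih]

open scoped Classical in
theorem cycWt_root_pow_mul (i : ℕ) (c : CycRing F n) : cycWt (ω ^ i * c) = cycWt c := by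
  rw [← card_cycCoeff_ne_zero, ← card_cycCoeff_ne_zero]
  refine card_nbij' (· - (i : ZMod n)) (· + (i : ZMod n)) (fun j hj => ?_) (fun j hj => ?_)
    (fun j _ => sub_add_cancel j _) (fun j _ => add_sub_cancel_right j _)
  · simpa [← cycCoeff_add_root_pow_mul (j - (i : ZMod n)) i c] using hj
  · simpa [cycCoeff_add_root_pow_mul] using hj

theorem exists_cycCoeff_ne_zero {c : CycRing F n} (hc : c ≠ 0) : ∃ j, cycCoeff j c ≠ 0 := by
  classical
  have hrep : cycRep c ≠ 0 := fun h => hc (by rw [← mk_cycRep c, h, map_zero])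
  have hwt : 0 < #{j | cycCoeff j c ≠ 0} := by
    rw [card_cycCoeff_ne_zero, cycWt, card_pos]
    exact support_nonempty.2 hrep
  obtain ⟨j, hj⟩ := card_pos.1 hwt
  exact ⟨j, (mem_filter.1 hj).2⟩

theorem exists_cycCoeff_root_pow_mul_ne_zero {c : CycRing F n} (hc : c ≠ 0) (j : ZMod n) :
    ∃ i : ℕ, cycCoeff j (ω ^ i * c) ≠ 0 := by
  obtain ⟨j₀, hj₀⟩ := exists_cycCoeff_ne_zero hc
  have h := cycCoeff_add_root_pow_mul j₀ (j - j₀).val c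
  rw [ZMod.natCast_zmod_val, add_sub_cancel] at h
  exact ⟨_, h ▸ hj₀⟩

end CycRing

open CycRing Submodule in
theorem naive_UP_cyclic_codes_general (n : ℕ) (F : Type*) [Field F] (hn : 1 ≤ n)
    (f : CycRing F n) (hf : f ≠ 0) :
    n ≤ cycDist (Ideal.span {f}) * cycDim F (Ideal.span {f}) := by
  have : NeZero n := ⟨by omega⟩
  have : FiniteDimensional F (CycRing F n) := monic_X_pow_sub_one.finite_adjoinRoot
  set I := Ideal.span {f}
  obtain ⟨c, hcC, hc0, hcw⟩ : cycDist I ∈ {w | ∃ g ∈ I, g ≠ 0 ∧ cycWt g = w} :=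
    Nat.sInf_mem ⟨_, f, Ideal.mem_span_singleton_self f, hf, rfl⟩
  let shifts := Set.range fun i : ℕ => AdjoinRoot.root (X ^ n - C (1 : F)) ^ i * c
  have hshifts : span F shifts ≤ I.restrictScalars F :=
    span_le.2 <| Set.range_subset_iff.2 fun i => I.mul_mem_left _ hcC
  calc n = Fintype.card (ZMod n) := (ZMod.card n).symm
    _ ≤ Module.finrank F (span F shifts) * cycWt c :=
      card_le_finrank_span_mul_of_forall_exists_ne_zero cycCoeff shifts _
        (Set.forall_mem_range.2 fun i =>
          ((card_cycCoeff_ne_zero _).trans (cycWt_root_pow_mul i c)).le)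
        fun j => by
          obtain ⟨i, hi⟩ := exists_cycCoeff_root_pow_mul_ne_zero hc0 j
          exact ⟨_, ⟨i, rfl⟩, hi⟩
    _ ≤ cycDim F I * cycDist I := by
      rw [hcw]
      gcongr
      exact finrank_mono hshifts
    _ = cycDist I * cycDim F I := mul_comm _ _

/-- For every nonzero f in R(F_q,n) with gcd(n,q)=1, the ideal C(f) generated by f
satisfies d(C(f)) · dim C(f) ≥ n. -/
theorem naive_UP_cyclic_codes (q n : ℕ) (F : Type*) [Field F] [Fintype F]
    (hq : Fintype.card F = q) (hn : 1 ≤ n) (hcop : Nat.Coprime n q)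
    (f : CycRing F n) (hf : f ≠ 0) :
    n ≤ cycDist (Ideal.span {f}) * cycDim F (Ideal.span {f}) :=
  naive_UP_cyclic_codes_general n F hn f hf
end

section
/- Let q be a prime power, n ≥ 1 with gcd(n,q) = 1, and ζ a primitive n-th root of unity in an algebraic closure K of F_q. If f ∈ F_q^n is nonzero with Hamming weight w = w_H(f), then there is no a ∈ Z such that f(ζ^{a+1}) = f(ζ^{a+2}) = … = f(ζ^{a+w}) = 0; that is, the Mattson–Solomon vector f̂ has no w cyclically consecutive zero coordinates. -/
open Polynomial

/-- If f ∈ F_q^n is nonzero of Hamming weight w, and gcd(n,q) = 1, then the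
Mattson–Solomon vector of f has no w cyclically consecutive zero coordinates:
there is no a ∈ ℤ with f(ζ^{a+1}) = ⋯ = f(ζ^{a+w}) = 0. -/
theorem no_consecutive_zeros (q n : ℕ) (F : Type*) [Field F] [Fintype F]
    (hq : Fintype.card F = q) (hn : 1 ≤ n) (hcop : Nat.Coprime n q)
    (ζ : AlgebraicClosure F) (hζ : IsPrimitiveRoot ζ n)
    (f : Fin n → F) (hf : f ≠ 0) (w : ℕ) (hw : w = wt f) :
    ¬ ∃ a : ℤ, ∀ k : ℕ, 1 ≤ k → k ≤ w →
      Polynomial.aeval (ζ ^ (a + (k : ℤ))) (vecPoly f) = 0 := by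
  classical
  rintro ⟨a, ha⟩
  have hζ0 : ζ ≠ 0 := hζ.ne_zero (by omega)
  set S : Finset (Fin n) := Finset.univ.filter (fun i => f i ≠ 0) with hS
  have hScard : S.card = w := by
    rw [hw, wt, Set.ncard_eq_toFinset_card']
    congr 1
    ext i
    simp [hS]
  obtain ⟨i0, hi0⟩ : ∃ i, f i ≠ 0 := by
    by_contra h
    push_neg at h
    exact hf (funext h)
  have hw0 : 0 < w := by
    rw [← hScard]
    exact Finset.card_pos.mpr ⟨i0, by simp [hS, hi0]⟩
  let e : Fin w ≃ S := (S.equivFinOfCardEq hScard).symm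
  set x : Fin w → (AlgebraicClosure F) := fun j => ζ ^ (((e j : Fin n)) : ℕ) with hx
  have hxinj : Function.Injective x := by
    intro j j' h
    have := hζ.pow_inj (e j : Fin n).2 (e j' : Fin n).2 h
    exact e.injective (Subtype.ext (Fin.ext this))
  have hx0 : ∀ j, x j ≠ 0 := fun j => pow_ne_zero _ hζ0
  set c : Fin w → (AlgebraicClosure F) := fun j =>
    algebraMap F (AlgebraicClosure F) (f (e j)) * (ζ ^ a) ^ (((e j : Fin n)) : ℕ) with hc
  set A : Matrix (Fin w) (Fin w) (AlgebraicClosure F) := Matrix.of (fun k j => x j ^ ((k : ℕ) + 1)) with hA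
  have hmul : A.mulVec c = 0 := by
    funext k
    have hk := ha ((k : ℕ) + 1) (by omega) (by omega)
    have hexp : ∀ i : Fin n, (ζ ^ (a + (((k : ℕ) + 1 : ℕ) : ℤ))) ^ (i : ℕ)
        = (ζ ^ a) ^ (i : ℕ) * (ζ ^ (i : ℕ)) ^ ((k : ℕ) + 1) := by
      intro i
      rw [zpow_add₀ hζ0, mul_pow]
      congr 1
      rw [zpow_natCast, ← pow_mul, ← pow_mul, Nat.mul_comm]
    rw [vecPoly, map_sum] at hk
    simp only [map_mul, aeval_C, map_pow, aeval_X] at hk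
    simp only [hexp] at hk
    have hsum : ∑ i : Fin n, algebraMap F (AlgebraicClosure F) (f i) *
        ((ζ ^ a) ^ (i : ℕ) * (ζ ^ (i : ℕ)) ^ ((k : ℕ) + 1)) =
        ∑ i ∈ S, algebraMap F (AlgebraicClosure F) (f i) *
        ((ζ ^ a) ^ (i : ℕ) * (ζ ^ (i : ℕ)) ^ ((k : ℕ) + 1)) := by
      apply (Finset.sum_subset (Finset.subset_univ S) _).symm
      intro i _ hiS
      have : f i = 0 := by
        by_contra h
        exact hiS (by simp [hS, h])
      simp [this]
    rw [hsum] at hk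
    have hre : ∑ i ∈ S, algebraMap F (AlgebraicClosure F) (f i) *
        ((ζ ^ a) ^ (i : ℕ) * (ζ ^ (i : ℕ)) ^ ((k : ℕ) + 1)) =
        ∑ j : Fin w, A k j * c j := by
      rw [← e.symm.sum_comp (fun j => A k j * c j)]
      rw [← Finset.sum_coe_sort S]
      apply Finset.sum_congr rfl
      intro i _
      simp only [hA, hc, hx, Matrix.of_apply, Equiv.apply_symm_apply]
      ring
    rw [hre] at hk
    simpa [Matrix.mulVec, dotProduct] using hk
  have hdet : A.det ≠ 0 := by
    have hAeq : A = (Matrix.vandermonde x).transpose * Matrix.diagonal x := by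
      ext k j
      rw [Matrix.mul_diagonal]
      simp [hA, Matrix.vandermonde, pow_succ]
    rw [hAeq, Matrix.det_mul, Matrix.det_transpose, Matrix.det_diagonal]
    exact mul_ne_zero (Matrix.det_vandermonde_ne_zero_iff.mpr hxinj)
      (Finset.prod_ne_zero_iff.mpr fun j _ => hx0 j)
  have hc0 : c = 0 := Matrix.eq_zero_of_mulVec_eq_zero hdet hmul
  have hj : c ⟨0, hw0⟩ = 0 := by rw [hc0]; rfl
  have hfj : f (e ⟨0, hw0⟩) ≠ 0 := by
    have := (e ⟨0, hw0⟩).2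
    exact (Finset.mem_filter.mp this).2
  rw [hc] at hj
  rcases mul_eq_zero.mp hj with h | h
  · exact hfj ((_root_.map_eq_zero _).mp h)
  · exact pow_ne_zero _ (zpow_ne_zero _ hζ0) h
end

section
/- Let q be a prime power and p a prime with p ∤ q. Assume the MDS conjecture in the form: every linear code over F_q of length N, dimension K and minimum distance N−K+1 with 1 < K < N−1 satisfies N ≤ q+2. If q is not a primitive root modulo p and p > q+2, then μ(F_q,p) ≤ p. -/
open Polynomial

/-- The invariant μ(F,n). -/
noncomputable def mu (F : Type*) [Field F] (n : ℕ) : ℕ :=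
  sInf {w | ∃ f : CycRing F n, f ≠ 0 ∧
    cycDist (Ideal.span {f}) + cycDim F (Ideal.span {f}) = w}

/-- Minimum distance of a linear code of length N over F. -/
noncomputable def codeDist {F : Type*} [Field F] {N : ℕ} (Cd : Submodule F (Fin N → F)) : ℕ :=
  sInf {w | ∃ x ∈ Cd, x ≠ 0 ∧ wt x = w}

/-!
Let `e` be the order of `q` modulo `p`. Over `F_q` every irreducible factor `g` of the cyclotomic
polynomial `Φ_p` has degree `e`, and `e` is a proper divisor of `p - 1` because `q` is not a
primitive root, so `2 * e ≤ p - 1`. The ideal generated by `(X - 1) * g` in `F_q[X]/(X^p - 1)` is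
the kernel of the reduction to `F_q[X]/((X - 1) * g)`, hence has dimension `k = p - 1 - e`, with
`1 < k < p - 1`. By the Singleton bound its minimum distance is at most `p - k + 1`, and equality
would make it an MDS code of length `p > q + 2`, contradicting the MDS conjecture.
-/

open AdjoinRoot

section CyclicCode

variable {F : Type*} [Field F] {n : ℕ} [NeZero n]

lemma cycRep_eq_modByMonicHom (r : CycRing F n) :
    cycRep r = modByMonicHom (monic_X_pow_sub_C (1 : F) (NeZero.ne n)) r :=
  dif_neg (NeZero.ne n)

lemma mk_cycRep (r : CycRing F n) : mk (X ^ n - C 1) (cycRep r) = r := by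
  rw [cycRep_eq_modByMonicHom]
  exact mk_leftInverse _ r

lemma degree_cycRep_lt (r : CycRing F n) : (cycRep r).degree < n := by
  obtain ⟨a, rfl⟩ := mk_surjective r
  rw [cycRep_eq_modByMonicHom, modByMonicHom_mk,
    ← degree_X_pow_sub_C (Nat.pos_of_neZero n) (1 : F)]
  exact degree_modByMonic_lt a (monic_X_pow_sub_C 1 (NeZero.ne n))

variable (F n) in
noncomputable def coeffVec : CycRing F n →ₗ[F] (Fin n → F) :=
  LinearMap.pi fun i => (lcoeff F i).comp (modByMonicHom (monic_X_pow_sub_C 1 (NeZero.ne n)))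

lemma coeffVec_apply (r : CycRing F n) (i : Fin n) : coeffVec F n r i = (cycRep r).coeff i := by
  rw [cycRep_eq_modByMonicHom]
  rfl

lemma coeffVec_injective : Function.Injective (coeffVec F n) := by
  refine (injective_iff_map_eq_zero _).mpr fun r hr => ?_
  have hrep : cycRep r = 0 := by
    ext j
    rw [coeff_zero]
    by_cases hj : j < n
    · simpa [coeffVec_apply] using congrFun hr ⟨j, hj⟩
    · exact coeff_eq_zero_of_degree_lt <|
        (degree_cycRep_lt r).trans_le (by exact_mod_cast not_lt.mp hj)
  rw [← mk_cycRep r, hrep, map_zero]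

lemma wt_coeffVec (r : CycRing F n) : wt (coeffVec F n r) = cycWt r := by
  classical
  have hlt : ∀ m ∈ (cycRep r).support, m < n := fun m hm => by
    exact_mod_cast (le_degree_of_ne_zero (mem_support_iff.mp hm)).trans_lt (degree_cycRep_lt r)
  have hsupp :
      {i : Fin n | coeffVec F n r i ≠ 0} = ((cycRep r).support.attachFin hlt : Set _) := by
    ext i
    simp [coeffVec_apply]
  rw [wt, hsupp, Set.ncard_coe_finset, Finset.card_attachFin, cycWt]

noncomputable def cycCode (I : Ideal (CycRing F n)) : Submodule F (Fin n → F) :=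
  (I.restrictScalars F).map (coeffVec F n)

lemma finrank_cycCode (I : Ideal (CycRing F n)) :
    Module.finrank F (cycCode I) = cycDim F I :=
  (Submodule.equivMapOfInjective _ coeffVec_injective _).finrank_eq.symm

lemma codeDist_cycCode (I : Ideal (CycRing F n)) : codeDist (cycCode I) = cycDist I := by
  rw [codeDist, cycDist]
  congr 1
  ext w
  constructor
  · rintro ⟨_, ⟨r, hr, rfl⟩, hne, rfl⟩
    exact ⟨r, hr, fun h => hne (by rw [h, map_zero]), (wt_coeffVec r).symm⟩
  · rintro ⟨r, hr, hne, rfl⟩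
    exact ⟨_, ⟨r, hr, rfl⟩, (map_ne_zero_iff _ coeffVec_injective).mpr hne, wt_coeffVec r⟩

end CyclicCode

theorem codeDist_add_finrank_le {F : Type*} [Field F] {N : ℕ} (Cd : Submodule F (Fin N → F)) :
    codeDist Cd + Module.finrank F Cd ≤ N + 1 := by
  set K := Module.finrank F Cd
  have hKN : K ≤ N := (Submodule.finrank_le Cd).trans_eq (Module.finrank_fin_fun F)
  rcases Nat.eq_zero_or_pos K with hK0 | hKpos
  · have hbot : Cd = ⊥ := Submodule.finrank_eq_zero.mp hK0
    simp [codeDist, hbot, hK0]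
  -- a nonzero codeword vanishing on the first `K - 1` coordinates
  let π : Cd →ₗ[F] (Fin (K - 1) → F) :=
    LinearMap.funLeft F F (Fin.castLE (by omega : K - 1 ≤ N)) ∘ₗ Cd.subtype
  have hker : LinearMap.ker π ≠ ⊥ :=
    LinearMap.ker_ne_bot_of_finrank_lt (by rw [Module.finrank_fin_fun]; omega)
  obtain ⟨x, hxker, hx0⟩ := (Submodule.ne_bot_iff _).mp hker
  have hsupp :
      {i | (x : Fin N → F) i ≠ 0} ⊆ ↑(Finset.Ici (⟨K - 1, by omega⟩ : Fin N)) := by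
    intro i hi
    by_contra hlt
    have hiK : (i : ℕ) < K - 1 := by simp [Fin.le_def] at hlt; omega
    exact hi (congrFun hxker ⟨i, hiK⟩)
  have hwt : wt (x : Fin N → F) ≤ N - (K - 1) := by
    have h := Set.ncard_le_ncard hsupp
    rwa [Set.ncard_coe_finset, Fin.card_Ici] at h
  have hdist : codeDist Cd ≤ wt (x : Fin N → F) :=
    Nat.sInf_le ⟨x, x.2, fun h => hx0 (Subtype.ext h), rfl⟩
  omega

namespace AdjoinRoot

section CommRing

variable {R : Type*} [CommRing R] {f g : R[X]}

lemma algHomOfDvd_mk (hfg : f ∣ g) (a : R[X]) : algHomOfDvd R g f hfg (mk g a) = mk f a := by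
  have h : (algHomOfDvd R g f hfg).comp (mkₐ g) = mkₐ f :=
    Polynomial.algHom_ext (by simp [mk_X])
  simpa using congr($h a)

lemma mk_mem_span_mk_iff (hfg : f ∣ g) {a : R[X]} :
    mk g a ∈ Ideal.span {mk g f} ↔ f ∣ a := by
  refine ⟨fun ha => ?_, fun ha => Ideal.mem_span_singleton.mpr (map_dvd _ ha)⟩
  obtain ⟨c, hc⟩ := Ideal.mem_span_singleton.mp ha
  obtain ⟨b, rfl⟩ := mk_surjective c
  have hg : g ∣ a - f * b := mk_eq_zero.mp (by rw [map_sub, map_mul, hc, sub_self])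
  exact (dvd_sub_left (dvd_mul_right f b)).mp (hfg.trans hg)

lemma ker_algHomOfDvd (hfg : f ∣ g) :
    RingHom.ker (algHomOfDvd R g f hfg) = Ideal.span {mk g f} := by
  ext x
  obtain ⟨a, rfl⟩ := mk_surjective x
  rw [RingHom.mem_ker, algHomOfDvd_mk, mk_eq_zero, mk_mem_span_mk_iff hfg]

end CommRing

lemma finrank_span_mk_of_dvd {K : Type*} [Field K] {f g : K[X]} (hg : g ≠ 0) (hfg : f ∣ g) :
    Module.finrank K ((Ideal.span {mk g f}).restrictScalars K) = g.natDegree - f.natDegree := by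
  have := (powerBasis hg).finite
  let φ := (algHomOfDvd K g f hfg).toLinearMap
  have hrange : LinearMap.range φ = ⊤ := LinearMap.range_eq_top.mpr fun y => by
    obtain ⟨a, rfl⟩ := mk_surjective y
    exact ⟨mk g a, algHomOfDvd_mk hfg a⟩
  have hker : LinearMap.ker φ = (Ideal.span {mk g f}).restrictScalars K := by
    ext x
    exact SetLike.ext_iff.mp (ker_algHomOfDvd hfg) x
  have hrn := φ.finrank_range_add_finrank_ker
  rw [hrange, hker, finrank_top, (powerBasis hg).finrank,
    (powerBasis (ne_zero_of_dvd_ne_zero hg hfg)).finrank, powerBasis_dim, powerBasis_dim] at hrn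
  omega

end AdjoinRoot

lemma cycDim_span_mk_of_dvd {F : Type*} [Field F] {n : ℕ} [NeZero n] {f : F[X]}
    (hf : f ∣ X ^ n - C 1) :
    cycDim F (Ideal.span {mk (X ^ n - C 1) f}) = n - f.natDegree := by
  rw [cycDim, finrank_span_mk_of_dvd (X_pow_sub_C_ne_zero (Nat.pos_of_neZero n) 1) hf,
    natDegree_X_pow_sub_C]

theorem natDegree_eq_orderOf_of_dvd_cyclotomic {K : Type*} [Field K] [Fintype K] {n : ℕ}
    (hn : (Fintype.card K).Coprime n) {g : K[X]} (hg : g ∣ cyclotomic n K)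
    (hirr : Irreducible g) : g.natDegree = orderOf (Fintype.card K : ZMod n) := by
  obtain ⟨k, hr, hcard⟩ := FiniteField.card K (ringChar K)
  have := Fact.mk hr
  rw [natDegree_of_dvd_cyclotomic_of_irreducible hcard (Nat.Coprime.coprime_dvd_left
    (hcard ▸ dvd_pow_self _ k.ne_zero) hn) hg hirr, ← orderOf_units, ZMod.coe_unitOfCoprime,
    hcard]

lemma two_mul_le_of_dvd_of_ne {d m : ℕ} (hm : 0 < m) (hdvd : d ∣ m) (hne : d ≠ m) :
    2 * d ≤ m := by
  obtain ⟨c, rfl⟩ := hdvd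
  rcases c with _ | _ | c
  · omega
  · omega
  · nlinarith

theorem exists_dvd_X_pow_sub_one_natDegree_eq {F : Type*} [Field F] [Fintype F] {p : ℕ}
    [hp : Fact p.Prime] (hpq : (Fintype.card F).Coprime p) :
    ∃ f : F[X], f ∣ X ^ p - C 1 ∧ f.natDegree = orderOf (Fintype.card F : ZMod p) + 1 := by
  have hdeg : 0 < (cyclotomic p F).natDegree := by
    rw [natDegree_cyclotomic, Nat.totient_prime hp.out]
    exact Nat.sub_pos_of_lt hp.out.one_lt
  obtain ⟨g, hirr, hg⟩ := exists_irreducible_of_natDegree_pos hdeg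
  refine ⟨g * (X - C 1), ?_, ?_⟩
  · rw [C_1, ← cyclotomic_prime_mul_X_sub_one]
    exact mul_dvd_mul_right hg _
  · rw [natDegree_mul hirr.ne_zero (X_sub_C_ne_zero 1), natDegree_X_sub_C,
      natDegree_eq_orderOf_of_dvd_cyclotomic hpq hg hirr]

/-- Assuming the MDS conjecture, if q is not a primitive root modulo p and p > q+2,
then μ(F_q,p) ≤ p. -/
theorem mu_le_of_MDS_conjecture (q p : ℕ) (F : Type*) [Field F] [Fintype F]
    (hq : Fintype.card F = q) (hp : p.Prime) (hpq : ¬ p ∣ q)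
    (hMDS : ∀ (N K : ℕ) (Cd : Submodule F (Fin N → F)),
      Module.finrank F Cd = K → 1 < K → K < N - 1 →
      codeDist Cd = N - K + 1 → N ≤ q + 2)
    (hnotprim : orderOf ((q : ZMod p)) ≠ p - 1)
    (hbig : q + 2 < p) :
    mu F p ≤ p := by
  have := Fact.mk hp
  have := NeZero.mk hp.ne_zero
  subst hq
  obtain ⟨f, hdvd, hdeg⟩ := exists_dvd_X_pow_sub_one_natDegree_eq (F := F) (p := p)
    ((Nat.Prime.coprime_iff_not_dvd hp).mpr hpq).symm
  have horder_dvd : orderOf (Fintype.card F : ZMod p) ∣ p - 1 :=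
    ZMod.orderOf_dvd_card_sub_one (by rwa [Ne, ZMod.natCast_eq_zero_iff])
  have horder_pos := Nat.pos_of_dvd_of_pos horder_dvd (by omega)
  have horder_le := two_mul_le_of_dvd_of_ne (by omega) horder_dvd hnotprim
  have hq2 : 1 < Fintype.card F := Fintype.one_lt_card
  set I := Ideal.span {mk (X ^ p - C (1 : F)) f}
  have hdim : cycDim F I = p - f.natDegree := cycDim_span_mk_of_dvd hdvd
  have hsingleton := codeDist_add_finrank_le (cycCode I)
  rw [codeDist_cycCode, finrank_cycCode, hdim] at hsingleton
  have hnotMDS : cycDist I ≠ p - (p - f.natDegree) + 1 := fun h => by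
    have := hMDS p _ (cycCode I) ((finrank_cycCode I).trans hdim) (by omega) (by omega)
      ((codeDist_cycCode I).trans h)
    omega
  have hf0 : mk (X ^ p - C (1 : F)) f ≠ 0 :=
    mk_ne_zero_of_natDegree_lt (monic_X_pow_sub_C 1 hp.ne_zero)
      (ne_zero_of_dvd_ne_zero (X_pow_sub_C_ne_zero hp.pos 1) hdvd)
      (by rw [natDegree_X_pow_sub_C]; omega)
  calc mu F p ≤ cycDist I + cycDim F I := Nat.sInf_le ⟨_, hf0, rfl⟩
    _ ≤ p := by omega
end

section
/- Let q be a prime power and p a prime with p ∤ q. Then μ(F_q,p) ≥ min{ m + p − r_m(p) : 1 ≤ m ≤ p }, where r_m(p) is the Szemerédi function. -/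
open Polynomial

/-- `S` contains an arithmetic progression of length `m` in ℤ/nℤ:
a set {a + k·b : k ∈ {0,…,m−1}} with b ≠ 0. -/
def ContainsAP {n : ℕ} (S : Set (ZMod n)) (m : ℕ) : Prop :=
  ∃ a b : ZMod n, b ≠ 0 ∧ ∀ k : ℕ, k < m → a + (k : ZMod n) * b ∈ S

/-- The Szemerédi function r_m(n): the largest size of a subset of ℤ/nℤ not containing
an arithmetic progression of length m. -/
noncomputable def szemeredi (m n : ℕ) : ℕ :=
  sSup {c | ∃ S : Set (ZMod n), ¬ ContainsAP S m ∧ S.ncard = c}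

/-!
Let `f ≠ 0` and `g = gcd(X^p - 1, f)`, so that `C(f) = C(g)` has dimension at least `p - deg g`.
Index the `p`-th roots of unity `α^i` by `i ∈ ℤ/pℤ` and let `Z` be the set of those that are
roots of `g`; as `p ∤ q`, `X^p - 1` is separable, so `|Z| = deg g`. If `Z` contains an arithmetic
progression of length `ℓ`, every nonzero codeword vanishes at `α^(a + kb)` for `k < ℓ`, and as `α^b`
is again a primitive `p`-th root of unity, a Vandermonde argument (the BCH bound) shows that its
weight exceeds `ℓ`. Taking `m` to be the least length of a progression not contained in `Z`
gives `d(C) ≥ m` and `|Z| ≤ r_m(p)`, hence `d(C) + dim C ≥ m + p - r_m(p)`; in particular `m ≤ p`,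
since a codeword has weight at most `p`.
-/

theorem Polynomial.lt_card_support_of_eval_mul_pow_eq_zero {R : Type*} [CommRing R] [IsDomain R]
    {c : R[X]} (hc : c ≠ 0) {β γ : R} (hβ : β ≠ 0) (hγ : Set.InjOn (γ ^ ·) c.support)
    {ℓ : ℕ} (h : ∀ k < ℓ, c.eval (β * γ ^ k) = 0) : ℓ < c.support.card := by
  by_contra! hℓ
  set e := c.support.equivFin
  have hcoeff : (fun i ↦ c.coeff (e.symm i) * β ^ (e.symm i : ℕ)) = 0 := by
    refine Matrix.eq_zero_of_forall_pow_sum_mul_pow_eq_zero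
      (fun i j hij ↦ e.symm.injective (Subtype.ext (hγ (e.symm i).2 (e.symm j).2 hij))) fun i ↦ ?_
    rw [← h i (i.2.trans_le hℓ), eval_eq_sum, sum_def, ← Finset.sum_coe_sort c.support,
      ← e.symm.sum_comp]
    refine Finset.sum_congr rfl fun j _ ↦ ?_
    rw [mul_pow, ← pow_mul, ← pow_mul, mul_comm (i : ℕ), mul_assoc]
  obtain ⟨t, ht⟩ := support_nonempty.mpr hc
  have := congrFun hcoeff (e ⟨t, ht⟩)
  simp only [Equiv.symm_apply_apply, Pi.zero_apply, mul_eq_zero, pow_eq_zero_iff', hβ] at this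
  exact mem_support_iff.mp ht (by simpa using this)

theorem pow_val_add_natCast_mul {M : Type*} [Monoid M] {n : ℕ} [NeZero n] {α : M}
    (hα : α ^ n = 1) (a b : ZMod n) (k : ℕ) :
    α ^ (a + k * b).val = α ^ a.val * (α ^ b.val) ^ k := by
  have : a + k * b = ((a.val + k * b.val : ℕ) : ZMod n) := by push_cast; simp
  rw [this, ZMod.val_natCast, ← pow_eq_pow_mod _ hα, pow_add, ← pow_mul, mul_comm k]

theorem IsPrimitiveRoot.lt_card_support_of_eval_pow_add_mul_eq_zero {E : Type*} [CommRing E]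
    [IsDomain E] {n : ℕ} [NeZero n] {α : E} (hα : IsPrimitiveRoot α n) {c : E[X]} (hc : c ≠ 0)
    (hdeg : c.natDegree < n) {a b : ZMod n} (hb : IsUnit b) {ℓ : ℕ}
    (h : ∀ k < ℓ, c.eval (α ^ (a + k * b).val) = 0) : ℓ < c.support.card := by
  have hγ : IsPrimitiveRoot (α ^ b.val) n :=
    hα.pow_of_coprime _ (ZMod.val_coe_unit_coprime hb.unit)
  refine c.lt_card_support_of_eval_mul_pow_eq_zero hc
    (pow_ne_zero a.val (hα.ne_zero (NeZero.ne n)))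
    (fun i hi j hj hij ↦ hγ.pow_inj ((le_natDegree_of_mem_supp i hi).trans_lt hdeg)
      ((le_natDegree_of_mem_supp j hj).trans_lt hdeg) hij) fun k hk ↦ ?_
  rw [← pow_val_add_natCast_mul hα.pow_eq_one]
  exact h k hk

theorem FiniteField.natCast_ne_zero_of_not_dvd_card {F : Type*} [Field F] [Fintype F] {p : ℕ}
    (hp : p.Prime) (h : ¬p ∣ Fintype.card F) : (p : F) ≠ 0 := by
  intro hpF
  rw [← CharP.ringChar_of_prime_eq_zero hp hpF] at h
  exact h (ringChar.dvd (FiniteField.cast_card_eq_zero F))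

namespace AdjoinRoot

variable {F : Type*} [Field F] {P : F[X]}

theorem dvd_of_mk_mem_span_mk {g q : F[X]} (hg : g ∣ P) (h : mk P q ∈ Ideal.span {mk P g}) :
    g ∣ q := by
  obtain ⟨u, hu⟩ := Ideal.mem_span_singleton'.mp h
  obtain ⟨u, rfl⟩ := mk_surjective u
  rw [← map_mul, mk_eq_mk] at hu
  simpa using dvd_sub (dvd_mul_left g u) (hg.trans hu)

theorem span_mk_eq_span_mk_gcd [DecidableEq F] (q : F[X]) :
    Ideal.span {mk P q} = Ideal.span {mk P (gcd P q)} := by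
  refine le_antisymm (Ideal.span_singleton_le_span_singleton.mpr ?_)
    (Ideal.span_singleton_le_span_singleton.mpr ?_)
  · exact map_dvd _ (gcd_dvd_right P q)
  · obtain ⟨a, b, hab⟩ := exists_gcd_eq_mul_add_mul P q
    rw [hab, map_add, map_mul, mk_self, zero_mul, zero_add, map_mul]
    exact dvd_mul_right _ _

theorem natDegree_sub_natDegree_le_finrank (hP : P ≠ 0) {g : F[X]} (hg : g ≠ 0)
    {I : Ideal (AdjoinRoot P)} (hgI : mk P g ∈ I) :
    P.natDegree - g.natDegree ≤ Module.finrank F (I.restrictScalars F) := by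
  have : Module.Finite F (AdjoinRoot P) := (powerBasis hP).finite
  set k := P.natDegree - g.natDegree
  let φ : degreeLT F k →ₗ[F] I.restrictScalars F :=
    ((mkₐ P).toLinearMap ∘ₗ LinearMap.mulLeft F g ∘ₗ (degreeLT F k).subtype).codRestrict _
      fun h ↦ by simpa using I.mul_mem_right (mk P h) hgI
  have hφ : Function.Injective φ := by
    rw [← LinearMap.ker_eq_bot, LinearMap.ker_eq_bot']
    rintro ⟨h, hk⟩ hφh
    have hdvd : P ∣ g * h := by
      rw [← mk_eq_zero, map_mul]
      simpa [φ] using congrArg Subtype.val hφh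
    by_contra hne
    have hh : h ≠ 0 := fun h0 ↦ hne (Subtype.ext h0)
    have hlt : h.natDegree < k := (natDegree_lt_iff_degree_lt hh).mpr (mem_degreeLT.mp hk)
    have := natDegree_le_of_dvd hdvd (mul_ne_zero hg hh)
    rw [natDegree_mul hg hh] at this
    omega
  calc k = Module.finrank F (degreeLT F k) := by simp [(degreeLTEquiv F k).finrank_eq]
    _ ≤ _ := φ.finrank_le_finrank_of_injective hφ

end AdjoinRoot

section CycRing

variable {F : Type*} [Field F] {n : ℕ}

theorem mk_cycRep_s9 (hn : n ≠ 0) (c : CycRing F n) : AdjoinRoot.mk _ (cycRep c) = c := by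
  rw [cycRep, dif_neg hn]
  exact AdjoinRoot.mk_leftInverse (monic_X_pow_sub_C 1 hn) c

theorem cycRep_ne_zero (hn : n ≠ 0) {c : CycRing F n} (hc : c ≠ 0) : cycRep c ≠ 0 := by
  contrapose! hc
  rw [← mk_cycRep_s9 hn c, hc, map_zero]

theorem natDegree_cycRep_lt (hn : n ≠ 0) (c : CycRing F n) : (cycRep c).natDegree < n := by
  obtain ⟨u, rfl⟩ := AdjoinRoot.mk_surjective c
  have hmonic := monic_X_pow_sub_C (1 : F) hn
  rw [cycRep, dif_neg hn, AdjoinRoot.modByMonicHom_mk]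
  refine (natDegree_modByMonic_lt u hmonic fun h ↦ ?_).trans_eq natDegree_X_pow_sub_C
  have := congrArg natDegree h
  rw [natDegree_X_pow_sub_C, natDegree_one] at this
  exact hn this

theorem cycWt_le (hn : n ≠ 0) (c : CycRing F n) : cycWt c ≤ n :=
  (Finset.card_le_card (supp_subset_range (natDegree_cycRep_lt hn c))).trans_eq
    (Finset.card_range n)

theorem le_mu (hn : n ≠ 0) {b : ℕ}
    (h : ∀ f : CycRing F n, f ≠ 0 → b ≤ cycDist (Ideal.span {f}) + cycDim F (Ideal.span {f})) :
    b ≤ mu F n := by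
  have : Nontrivial (CycRing F n) := AdjoinRoot.nontrivial _ <| by
    rw [degree_X_pow_sub_C (Nat.pos_of_ne_zero hn)]
    exact_mod_cast hn
  refine le_csInf ⟨_, 1, one_ne_zero, rfl⟩ ?_
  rintro _ ⟨f, hf, rfl⟩
  exact h f hf

theorem le_cycDist {I : Ideal (CycRing F n)} {f : CycRing F n} (hfI : f ∈ I) (hf : f ≠ 0) {w : ℕ}
    (h : ∀ c ∈ I, c ≠ 0 → w ≤ cycWt c) : w ≤ cycDist I := by
  refine le_csInf ⟨_, f, hfI, hf, rfl⟩ ?_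
  rintro _ ⟨c, hc, hc0, rfl⟩
  exact h c hc hc0

end CycRing

theorem containsAP_zero {n : ℕ} [Nontrivial (ZMod n)] (S : Set (ZMod n)) : ContainsAP S 0 :=
  ⟨0, 1, one_ne_zero, fun k hk ↦ absurd hk k.not_lt_zero⟩

theorem ncard_le_szemeredi {m n : ℕ} [NeZero n] {S : Set (ZMod n)} (hS : ¬ContainsAP S m) :
    S.ncard ≤ szemeredi m n := by
  refine le_csSup ⟨n, ?_⟩ ⟨S, hS, rfl⟩
  rintro _ ⟨T, -, rfl⟩
  simpa using T.ncard_le_card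

/-- For a primitive `n`-th root of unity `α`, the defining set of the cyclic code generated by
`g`. -/
def definingSet {R E : Type*} [CommSemiring R] [CommSemiring E] [Algebra R E] (n : ℕ) (α : E)
    (g : R[X]) : Set (ZMod n) :=
  {i | aeval (α ^ i.val) g = 0}

section DefiningSet

variable {F E : Type*} [Field F] [Field E] [Algebra F E] {n : ℕ} [NeZero n] {α : E}

theorem IsPrimitiveRoot.ncard_definingSet (hα : IsPrimitiveRoot α n) {g : F[X]}
    (hg : g ∣ X ^ n - C 1) : (definingSet n α g).ncard = g.natDegree := by
  have hX : (X ^ n - C 1 : F[X]) ≠ 0 := X_pow_sub_C_ne_zero (NeZero.pos n) 1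
  have hg0 : g ≠ 0 := ne_zero_of_dvd_ne_zero hX hg
  have hnF : (n : F) ≠ 0 := fun h ↦ hα.neZero'.out (by simpa using congrArg (algebraMap F E) h)
  have hsep : g.Separable := (separable_X_pow_sub_C 1 hnF one_ne_zero).of_dvd hg
  have hsplit : Splits (g.map (algebraMap F E)) := by
    refine (X_pow_sub_one_splits hα).of_dvd (X_pow_sub_C_ne_zero (NeZero.pos n) 1) ?_
    simpa using Polynomial.map_dvd (algebraMap F E) hg
  have hinj : Function.Injective fun i : ZMod n ↦ α ^ i.val := fun i j hij ↦
    ZMod.val_injective n (hα.pow_inj (ZMod.val_lt i) (ZMod.val_lt j) hij)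
  have himage : (fun i : ZMod n ↦ α ^ i.val) '' definingSet n α g = g.rootSet E := by
    ext β
    refine ⟨?_, fun hβ ↦ ?_⟩
    · rintro ⟨i, hi, rfl⟩
      exact mem_rootSet.mpr ⟨hg0, hi⟩
    obtain ⟨-, hβ⟩ := mem_rootSet.mp hβ
    have hβn : β ^ n = 1 := by
      obtain ⟨t, ht⟩ := hg
      simpa [hβ, sub_eq_zero] using congrArg (aeval β) ht
    obtain ⟨i, hi, rfl⟩ := hα.eq_pow_of_pow_eq_one hβn
    exact ⟨i, by simpa [definingSet, ZMod.val_cast_of_lt hi] using hβ,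
      by simp [ZMod.val_cast_of_lt hi]⟩
  rw [← Set.ncard_image_of_injective _ hinj, himage, ← Nat.card_coe_set_eq,
    Nat.card_eq_fintype_card, card_rootSet_eq_natDegree hsep hsplit]

theorem IsPrimitiveRoot.lt_cycWt_of_containsAP {p : ℕ} [Fact p.Prime]
    (hα : IsPrimitiveRoot α p) {g : F[X]} {c : CycRing F p} (hc : c ≠ 0) (hgc : g ∣ cycRep c)
    {ℓ : ℕ} (hℓ : ContainsAP (definingSet p α g) ℓ) : ℓ < cycWt c := by
  obtain ⟨a, b, hb, hAP⟩ := hℓ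
  have hp := NeZero.ne p
  rw [cycWt, ← support_map_of_injective _ (algebraMap F E).injective]
  refine hα.lt_card_support_of_eval_pow_add_mul_eq_zero (a := a)
    ((Polynomial.map_ne_zero_iff (algebraMap F E).injective).mpr (cycRep_ne_zero hp hc))
    ((natDegree_map _).trans_lt (natDegree_cycRep_lt hp c)) hb.isUnit fun k hk ↦ ?_
  obtain ⟨s, hs⟩ := hgc
  rw [eval_map_algebraMap, hs, map_mul, hAP k hk, zero_mul]

end DefiningSet

theorem IsPrimitiveRoot.exists_le_cycDist_add_cycDim {F E : Type*} [Field F] [Field E]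
    [Algebra F E] {p : ℕ} [Fact p.Prime] {α : E} (hα : IsPrimitiveRoot α p) {f : CycRing F p}
    (hf : f ≠ 0) : ∃ m, 1 ≤ m ∧ m ≤ p ∧
      m + (p - szemeredi m p) ≤ cycDist (Ideal.span {f}) + cycDim F (Ideal.span {f}) := by
  classical
  have hp := NeZero.ne p
  have hX : (X ^ p - C 1 : F[X]) ≠ 0 := X_pow_sub_C_ne_zero (NeZero.pos p) 1
  set g := gcd (X ^ p - C 1) (cycRep f)
  have hgX : g ∣ X ^ p - C 1 := gcd_dvd_left _ _
  have hspan : Ideal.span {f} = Ideal.span {AdjoinRoot.mk _ g} := by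
    rw [← AdjoinRoot.span_mk_eq_span_mk_gcd, mk_cycRep_s9 hp]
  set Z := definingSet p α g
  have hwt : ∀ c ∈ Ideal.span {f}, c ≠ 0 → ∀ ℓ, ContainsAP Z ℓ → ℓ < cycWt c := by
    intro c hc hc0 ℓ hℓ
    refine hα.lt_cycWt_of_containsAP hc0 (AdjoinRoot.dvd_of_mk_mem_span_mk hgX ?_) hℓ
    rwa [mk_cycRep_s9 hp, ← hspan]
  have hZp : ¬ContainsAP Z p := fun h ↦
    (hwt f (Ideal.mem_span_singleton_self f) hf p h).not_ge (cycWt_le hp f)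
  have hZ : ∃ m, ¬ContainsAP Z m := ⟨p, hZp⟩
  obtain ⟨m, hmZ, hmin⟩ : ∃ m, ¬ContainsAP Z m ∧ ∀ k < m, ContainsAP Z k :=
    ⟨Nat.find hZ, Nat.find_spec hZ, fun k hk ↦ not_not.mp (Nat.find_min hZ hk)⟩
  have hm0 : m ≠ 0 := by
    rintro rfl
    exact hmZ (containsAP_zero Z)
  have hdist : m ≤ cycDist (Ideal.span {f}) :=
    le_cycDist (Ideal.mem_span_singleton_self f) hf fun c hc hc0 ↦ by
      have := hwt c hc hc0 (m - 1) (hmin _ (Nat.sub_one_lt hm0))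
      omega
  have hdim : p - g.natDegree ≤ cycDim F (Ideal.span {f}) := by
    rw [hspan, cycDim]
    simpa only [natDegree_X_pow_sub_C] using AdjoinRoot.natDegree_sub_natDegree_le_finrank hX
      (ne_zero_of_dvd_ne_zero hX hgX) (Ideal.mem_span_singleton_self _)
  have hZcard : g.natDegree ≤ szemeredi m p :=
    hα.ncard_definingSet hgX ▸ ncard_le_szemeredi hmZ
  exact ⟨m, Nat.one_le_iff_ne_zero.mpr hm0, not_lt.mp fun h ↦ hZp (hmin p h), by omega⟩

/-- μ(F_q,p) ≥ min{ m + p − r_m(p) : 1 ≤ m ≤ p }. -/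
theorem mu_ge_szemeredi (q p : ℕ) (F : Type*) [Field F] [Fintype F]
    (hq : Fintype.card F = q) (hp : p.Prime) (hpq : ¬ p ∣ q) :
    sInf {v | ∃ m : ℕ, 1 ≤ m ∧ m ≤ p ∧ v = m + (p - szemeredi m p)} ≤ mu F p := by
  have : Fact p.Prime := ⟨hp⟩
  have : NeZero (p : F) := ⟨FiniteField.natCast_ne_zero_of_not_dvd_card hp (hq ▸ hpq)⟩
  obtain ⟨α, hα⟩ := HasEnoughRootsOfUnity.exists_primitiveRoot (AlgebraicClosure F) p
  refine le_mu hp.ne_zero fun f hf ↦ ?_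
  obtain ⟨m, hm1, hmp, hle⟩ := hα.exists_le_cycDist_add_cycDim hf
  exact le_trans (Nat.sInf_le ⟨m, hm1, hmp, rfl⟩) hle
end

section
/- Let q be a prime power, n ≥ 1 with gcd(n,q) = 1, and let K be an algebraic closure of F_q. If r ∈ F_q[X] is a nonzero polynomial of degree < n with Hamming weight w (number of nonzero coefficients), then |{ω ∈ K : ω^n = 1 and r(ω) = 0}| ≤ n − ⌈n/w⌉. -/
open Polynomial

/-- Key "window" lemma: a nonzero polynomial of degree `< n` with `w` nonzero
coefficients cannot vanish on `w` consecutive powers of a primitive `n`-th root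
of unity. -/
lemma window_lemma {K : Type*} [Field K] {n : ℕ} (hn : 0 < n) {ζ : K}
    (hζ : IsPrimitiveRoot ζ n) {p : K[X]} (hp : p ≠ 0) (hdeg : p.degree < (n : ℕ))
    (i : ℕ) : ∃ k < p.support.card, p.eval (ζ ^ (i + k)) ≠ 0 := by
  by_contra hcon
  push_neg at hcon
  set w := p.support.card with hw
  have hζ0 : ζ ≠ 0 := by
    intro h
    have := hζ.pow_eq_one
    rw [h, zero_pow hn.ne'] at this
    exact zero_ne_one this
  -- index the support by `Fin w`
  have e : {x // x ∈ p.support} ≃ Fin w := p.support.equivFin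
  set f : Fin w → K := fun j => ζ ^ ((e.symm j : ℕ)) with hf
  set v : Fin w → K := fun j => p.coeff (e.symm j) * ζ ^ (i * (e.symm j : ℕ)) with hv
  have hndeg : p.natDegree < n := (Polynomial.natDegree_lt_iff_degree_lt hp).2 hdeg
  have hsupp_lt : ∀ j : {x // x ∈ p.support}, (j : ℕ) < n := fun j =>
    lt_of_le_of_lt (Polynomial.le_natDegree_of_mem_supp _ j.2) hndeg
  have hfinj : Function.Injective f := by
    intro a b hab
    have h1 := hζ.pow_inj (hsupp_lt (e.symm a)) (hsupp_lt (e.symm b)) hab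
    have h2 : (e.symm a) = (e.symm b) := Subtype.ext h1
    simpa using congrArg e h2
  have hsum : ∀ k : Fin w, (∑ j : Fin w, v j * f j ^ (k : ℕ)) = 0 := by
    intro k
    have heval := hcon k k.2
    rw [Polynomial.eval_eq_sum, Polynomial.sum_def] at heval
    have h1 : ∀ x : {x // x ∈ p.support},
        p.coeff x * (ζ ^ (i + (k : ℕ))) ^ (x : ℕ) = v (e x) * f (e x) ^ (k : ℕ) := by
      intro x
      simp only [hv, hf, Equiv.symm_apply_apply, ← pow_mul]
      rw [mul_assoc, ← pow_add]
      congr 2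
      ring
    calc ∑ j : Fin w, v j * f j ^ (k : ℕ)
        = ∑ x : {x // x ∈ p.support}, p.coeff x * (ζ ^ (i + (k : ℕ))) ^ (x : ℕ) :=
          (Fintype.sum_equiv e _ _ h1).symm
      _ = ∑ x ∈ p.support, p.coeff x * (ζ ^ (i + (k : ℕ))) ^ x :=
          Finset.sum_attach p.support (fun j => p.coeff j * (ζ ^ (i + (k : ℕ))) ^ j)
      _ = 0 := heval
  have hv0 : v = 0 :=
    Matrix.eq_zero_of_forall_pow_sum_mul_pow_eq_zero hfinj hsum
  obtain ⟨j, hj⟩ := Polynomial.support_nonempty.mpr hp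
  have hj' : v (e ⟨j, hj⟩) = 0 := by rw [hv0]; rfl
  simp only [hv, Equiv.symm_apply_apply, mul_eq_zero] at hj'
  rcases hj' with h | h
  · exact (Polynomial.mem_support_iff.mp hj) h
  · exact pow_ne_zero _ hζ0 h

/-- If r ∈ F_q[X] is a nonzero polynomial of degree < n with w nonzero coefficients and
gcd(n,q) = 1, then r has at most n − ⌈n/w⌉ roots among the n-th roots of unity in an
algebraic closure of F_q. -/
theorem root_count_bound (q n : ℕ) (F : Type*) [Field F] [Fintype F]
    (hq : Fintype.card F = q) (hn : 1 ≤ n) (hcop : Nat.Coprime n q)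
    (r : F[X]) (hr : r ≠ 0) (hdeg : r.degree < n)
    (w : ℕ) (hw : w = r.support.card) :
    {ω : AlgebraicClosure F | ω ^ n = 1 ∧ Polynomial.aeval ω r = 0}.ncard ≤
      n - Nat.ceil ((n : ℚ) / (w : ℚ)) := by
  classical
  set K := AlgebraicClosure F
  have hn0 : 0 < n := hn
  haveI : NeZero n := ⟨hn0.ne'⟩
  -- the characteristic does not divide n
  set p0 := ringChar F with hp0
  haveI hcF : CharP F p0 := ringChar.charP F
  have hp0prime : p0.Prime := CharP.char_is_prime F p0
  haveI hcK : CharP K p0 :=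
    charP_of_injective_algebraMap (algebraMap F K).injective p0
  have hndvd : ¬ p0 ∣ n := by
    obtain ⟨k, hk⟩ := FiniteField.card F p0
    intro hdvd
    have hq' : p0 ∣ q := by
      rw [← hq, hk.2]
      exact dvd_pow_self p0 k.ne_zero
    have : p0 ∣ Nat.gcd n q := Nat.dvd_gcd hdvd hq'
    rw [hcop] at this
    exact Nat.Prime.one_lt hp0prime |>.ne' (Nat.dvd_one.mp this)
  haveI hchar : NeZero (n : K) := by
    constructor
    rw [Ne, CharP.cast_eq_zero_iff K p0 n]
    exact hndvd
  -- obtain a primitive n-th root of unity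
  obtain ⟨ζ, hζroot⟩ := IsAlgClosed.exists_root (Polynomial.cyclotomic n K) (by
    rw [Polynomial.degree_cyclotomic]
    simp only [Ne, Nat.cast_eq_zero]
    exact (Nat.totient_pos.mpr hn0).ne')
  have hζ : IsPrimitiveRoot ζ n := (Polynomial.isRoot_cyclotomic_iff).mp hζroot
  have hζ1 : ζ ^ n = 1 := hζ.pow_eq_one
  -- pass to the mapped polynomial over K
  set P : K[X] := r.map (algebraMap F K) with hP
  have hP0 : P ≠ 0 := (Polynomial.map_ne_zero_iff (algebraMap F K).injective).mpr hr
  have hPdeg : P.degree < (n : ℕ) := by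
    rwa [hP, Polynomial.degree_map_eq_of_injective (algebraMap F K).injective]
  have hPsupp : P.support = r.support :=
    Polynomial.support_map_of_injective r (algebraMap F K).injective
  have hPw : P.support.card = w := by rw [hPsupp, hw]
  have haeval : ∀ x : K, Polynomial.aeval x r = P.eval x := fun x => by
    rw [Polynomial.aeval_def, hP, Polynomial.eval_map]
  have hw1 : 0 < w := by
    rw [hw, Finset.card_pos, Polynomial.support_nonempty]
    exact hr
  -- the set of "non-root" exponents
  set T : Finset ℕ := (Finset.range n).filter (fun i => P.eval (ζ ^ i) ≠ 0) with hT
  -- window lemma gives n ≤ T.card * w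
  have hwin : ∀ i : ℕ, ∃ k < w, P.eval (ζ ^ (i + k)) ≠ 0 := by
    intro i
    have := window_lemma hn0 hζ hP0 hPdeg i
    rwa [hPw] at this
  have hcount : n ≤ T.card * w := by
    classical
    have hinj : ∀ i ∈ Finset.range n,
        (((i + Classical.choose (hwin i)) % n, Classical.choose (hwin i)) : ℕ × ℕ)
          ∈ T ×ˢ Finset.range w := by
      intro i _
      obtain ⟨hk, hne⟩ := Classical.choose_spec (hwin i)
      refine Finset.mem_product.mpr ⟨?_, Finset.mem_range.mpr hk⟩
      simp only [hT, Finset.mem_filter, Finset.mem_range]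
      refine ⟨Nat.mod_lt _ hn0, ?_⟩
      rwa [← pow_eq_pow_mod _ hζ1]
    have hcard := Finset.card_le_card_of_injOn
      (fun i => (((i + Classical.choose (hwin i)) % n, Classical.choose (hwin i)) : ℕ × ℕ))
      hinj ?_
    · simpa [Finset.card_product] using hcard
    · intro i₁ h₁ i₂ h₂ heq
      simp only [Prod.mk.injEq] at heq
      obtain ⟨hmod, hkeq⟩ := heq
      rw [hkeq] at hmod
      have h₁' := Finset.mem_range.mp h₁
      have h₂' := Finset.mem_range.mp h₂
      have : i₁ % n = i₂ % n := by
        have := Nat.ModEq.add_right_cancel' (Classical.choose (hwin i₂)) hmod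
        exact this
      rwa [Nat.mod_eq_of_lt h₁', Nat.mod_eq_of_lt h₂'] at this
  -- hence ceil(n/w) ≤ T.card
  have hceil : Nat.ceil ((n : ℚ) / (w : ℚ)) ≤ T.card := by
    rw [Nat.ceil_le]
    rw [div_le_iff₀ (by exact_mod_cast hw1)]
    exact_mod_cast hcount
  -- the root set is contained in the image of range n \ T
  have hsub : {ω : K | ω ^ n = 1 ∧ Polynomial.aeval ω r = 0} ⊆
      ↑(((Finset.range n) \ T).image (fun i => ζ ^ i)) := by
    rintro ω ⟨hω1, hω2⟩
    obtain ⟨i, hi, rfl⟩ := hζ.eq_pow_of_pow_eq_one hω1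
    simp only [Finset.coe_image, Set.mem_image, Finset.mem_coe, Finset.mem_sdiff]
    refine ⟨i, ⟨Finset.mem_range.mpr hi, ?_⟩, rfl⟩
    simp only [hT, Finset.mem_filter, Finset.mem_range, not_and, not_not]
    intro _
    rw [← haeval]
    exact hω2
  have hTsub : T ⊆ Finset.range n := Finset.filter_subset _ _
  calc {ω : K | ω ^ n = 1 ∧ Polynomial.aeval ω r = 0}.ncard
      ≤ (((Finset.range n) \ T).image (fun i => ζ ^ i)).card := by
        rw [← Set.ncard_coe_finset]
        exact Set.ncard_le_ncard hsub (Finset.finite_toSet _)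
    _ ≤ ((Finset.range n) \ T).card := Finset.card_image_le
    _ = n - T.card := by rw [Finset.card_sdiff_of_subset hTsub, Finset.card_range]
    _ ≤ n - Nat.ceil ((n : ℚ) / (w : ℚ)) := Nat.sub_le_sub_left hceil n
end
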